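/- arXiv:1208.5909 — 4 statements merged into one kernel-verified Lean document; each statement's English description precedes it below -/
import Mathlib

section
/- Let Λ be a finite alphabet and L ⊆ Λ* an upward-closed language with respect to the subsequence relation. Then the set of all left quotients {L/w : w ∈ Λ*} is finite; consequently L is a regular language. -/
/-!
By Higman's lemma the subword order on words over a finite alphabet is a well-quasi-order.
Since `L` is upward closed, `w ↦ L/w` is monotone for the subword order and its values are
upward closed. Given infinitely many distinct quotients, Higman's lemma extracts
representatives `w₀, w₁, …` increasing in the subword order, so `L/w₀ ⊂ L/w₁ ⊂ ⋯` strictly.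
Picking `uₙ ∈ L/wₙ₊₁ \ L/wₙ` and applying Higman's lemma once more to `(uₙ)` gives `uₘ`
below `uₙ` with `m < n`, forcing `uₙ ∈ L/wₙ`. Regularity then follows by Myhill–Nerode.
-/

def IsUpwardClosed {α : Type*} (r : α → α → Prop) (S : Set α) : Prop :=
  ∀ ⦃a b⦄, a ∈ S → r a b → b ∈ S

instance List.isPreorder_sublist {α : Type*} : IsPreorder (List α) List.Sublist where
  refl := List.Sublist.refl
  trans _ _ _ := List.Sublist.trans

theorem List.wellQuasiOrdered_sublist {α : Type*} [Finite α] :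
    WellQuasiOrdered (List.Sublist (α := α)) := by
  have higman := (Set.univ : Set α).partiallyWellOrderedOn_of_wellQuasiOrdered
      (Finite.wellQuasiOrdered (· = ·)) |>.partiallyWellOrderedOn_sublistForall₂ (· = ·)
  intro f
  obtain ⟨m, n, hmn, hsub⟩ := higman.exists_lt (f := f) fun _ _ _ => Set.mem_univ _
  obtain ⟨l, hl, hsub⟩ := List.sublistForall₂_iff.1 hsub
  rw [List.forall₂_eq_eq_eq] at hl
  exact ⟨m, n, hmn, hl ▸ hsub⟩

namespace WellQuasiOrdered

variable {α β : Type*} {r : α → α → Prop} {s : β → β → Prop}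

theorem not_strictMono_of_isUpwardClosed (hs : WellQuasiOrdered s) {S : ℕ → Set β}
    (hS : ∀ n, IsUpwardClosed s (S n)) : ¬StrictMono S := by
  intro hmono
  choose u hu_mem hu_not_mem using fun n => Set.exists_of_ssubset (hmono (Nat.lt_succ_self n))
  obtain ⟨m, n, hmn, hrel⟩ := hs u
  exact hu_not_mem n (hS n (hmono.monotone hmn (hu_mem m)) hrel)

theorem finite_range_of_monotone_of_isUpwardClosed [IsPreorder α r] (hr : WellQuasiOrdered r)
    (hs : WellQuasiOrdered s) {f : α → Set β} (hf : ∀ ⦃a b⦄, r a b → f a ⊆ f b)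
    (hup : ∀ a, IsUpwardClosed s (f a)) : (Set.range f).Finite := by
  by_contra hinf
  let e := Set.Infinite.natEmbedding _ hinf
  choose a ha using fun n => (e n).2
  obtain ⟨g, hg⟩ := hr.exists_monotone_subseq a
  have hmono : Monotone fun n => f (a (g n)) := fun m n hmn => hf (hg m n hmn)
  have hinj : Function.Injective fun n => f (a (g n)) := fun m n hmn =>
    g.injective <| e.injective <| Subtype.ext <| by simpa only [ha] using hmn
  exact hs.not_strictMono_of_isUpwardClosed (fun n => hup _) (hmono.strictMono_iff_injective.2 hinj)

end WellQuasiOrdered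

namespace Language

variable {α : Type*} {L : Language α}

theorem isUpwardClosed_leftQuotient (hL : IsUpwardClosed List.Sublist L) (w : List α) :
    IsUpwardClosed List.Sublist (L.leftQuotient w) := fun _ _ hu huv =>
  hL hu ((List.Sublist.refl w).append huv)

theorem leftQuotient_le_of_sublist (hL : IsUpwardClosed List.Sublist L) {w w' : List α}
    (h : w.Sublist w') : L.leftQuotient w ≤ L.leftQuotient w' := fun u hu =>
  hL hu (h.append (List.Sublist.refl u))

end Language

/-- An upward-closed language (with respect to the subsequence relation) over a
finite alphabet has finitely many left quotients `L/w = {u : wu ∈ L}`;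
consequently it is regular, i.e. recognized by some DFA with finitely many
states. -/
theorem upwardClosed_finitely_many_quotients_and_regular {Λ : Type*} [Fintype Λ]
    (L : Language Λ)
    (hL : ∀ ⦃u w : List Λ⦄, u ∈ L → u.Sublist w → w ∈ L) :
    {M : Language Λ | ∃ w : List Λ, M = {u | w ++ u ∈ L}}.Finite ∧
      ∃ (σ : Type) (_ : Fintype σ) (M : DFA Λ σ), M.accepts = L := by
  have hfin : (Set.range L.leftQuotient).Finite :=
    List.wellQuasiOrdered_sublist.finite_range_of_monotone_of_isUpwardClosed
      List.wellQuasiOrdered_sublist (fun _ _ => Language.leftQuotient_le_of_sublist hL)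
      (Language.isUpwardClosed_leftQuotient hL)
  have hquot :
      {M : Language Λ | ∃ w : List Λ, M = {u | w ++ u ∈ L}} = Set.range L.leftQuotient := by
    ext M
    exact exists_congr fun w => eq_comm
  exact ⟨hquot ▸ hfin, Language.IsRegular.of_finite_range_leftQuotient hfin⟩
end

section
/- Let (X, ≤) be a well-quasi-order and → a finitely-branching transition relation on X that is downward-compatible with non-increasing path length: whenever x' ≤ x and x →* y via a path of length n, there exists y' ≤ y with x' →* y' via a path of length ≤ n. Let T be the tree of all paths from a fixed x₀ truncated at any node having a strict ancestor below it in ≤. Then T is finite, and a downward-closed target set G is reachable from x₀ if and only if some node of T lies in G. -/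
/-! By König's lemma the tree is finite as soon as it has no infinite branch, and an infinite
branch `x₀, c₁, c₂, …` would be a sequence with no pair `cᵢ ≤ cⱼ`, `i < j`, which the
well-quasi-order forbids. For reachability, take a shortest path from `x₀` into `G`. If it had
`p[i] ≤ p[j]` with `i < j`, downward compatibility would replay the part after `p[j]` starting
from `p[i]`, without getting longer, and so give a strictly shorter path ending below the old
endpoint, hence in `G`. A shortest path therefore has no such pair and is a node of the tree. -/

/-- The truncated reachability tree from `x₀`: the set of paths
`p = x₀, c₁, …, c_n` (head of the list is the root `x₀`, consecutive elements
related by `step`) such that no strict ancestor of an *internal* node lies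
below it: for `i < j` with `j` not the last index, `¬ p[i] ≤ p[j]`. -/
def TruncTree {X : Type*} [Preorder X] (step : X → X → Prop) (x₀ : X) :
    Set (List X) :=
  {p | p.head? = some x₀ ∧ p.Chain' step ∧
    ∀ i j : ℕ, i < j → j + 1 < p.length →
      ∀ a b : X, p[i]? = some a → p[j]? = some b → ¬ a ≤ b}

section

variable {α X : Type*}

theorem List.exists_eq_append_of_not_pairwise {R : α → α → Prop} {l : List α}
    (h : ¬ l.Pairwise R) : ∃ l₁ a l₂ b l₃, l = l₁ ++ a :: l₂ ++ b :: l₃ ∧ ¬ R a b := by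
  induction l with
  | nil => simp at h
  | cons c t ih =>
    rw [List.pairwise_cons, not_and_or] at h
    rcases h with hc | ht
    · push Not at hc
      obtain ⟨b, hb, hcb⟩ := hc
      obtain ⟨l₂, l₃, rfl⟩ := List.append_of_mem hb
      exact ⟨[], c, l₂, b, l₃, by simp, hcb⟩
    · obtain ⟨l₁, a, l₂, b, l₃, rfl, hab⟩ := ih ht
      exact ⟨c :: l₁, a, l₂, b, l₃, by simp, hab⟩

theorem List.IsChain.relationReflTransGen_of_mem {r : α → α → Prop} {l : List α} {a b : α}
    (hl : l.IsChain r) (ha : l.head? = some a) (hb : b ∈ l) : Relation.ReflTransGen r a b :=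
  hl.induction _ l (fun _ _ hxy hx => hx.tail hxy)
    (fun hne => by rw [List.head?_eq_some_head hne, Option.some_inj] at ha; rw [ha]) b hb

theorem WellQuasiOrdered.wellFounded_snoc {r : α → α → Prop} (hr : WellQuasiOrdered r) :
    WellFounded fun l' l : List α => ∃ y, l' = l ++ [y] ∧ l.Pairwise fun a b => ¬ r a b := by
  rw [wellFounded_iff_isEmpty_descending_chain, isEmpty_subtype]
  intro g hg
  choose y hy hbad using hg
  have hmem : ∀ i j, i < j → y i ∈ g j := by
    intro i j hij
    induction j, hij using Nat.le_induction with
    | base => simp [hy i]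
    | succ j _ ih => simp [hy j, ih]
  obtain ⟨i, j, hij, hle⟩ := hr y
  have := hbad (j + 1)
  rw [hy j, List.pairwise_append] at this
  exact this.2.2 _ (hmem i j hij) _ (List.mem_singleton_self _) hle

/-- König's lemma for the tree of prefixes of `S`. -/
theorem Set.finite_of_wellFounded_snoc {S : Set (List α)}
    (hbranch : ∀ l, {y | ∃ p ∈ S, l ++ [y] <+: p}.Finite)
    (hwf : WellFounded fun l' l : List α => ∃ y, l' = l ++ [y] ∧ ∃ p ∈ S, l' <+: p) :
    S.Finite := by
  suffices ∀ l, {p ∈ S | l <+: p}.Finite by simpa using this []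
  intro l
  induction l using hwf.induction with
  | _ l ih =>
  refine ((Set.finite_singleton l).union <|
    (hbranch l).biUnion fun y hy => ih (l ++ [y]) ⟨y, rfl, hy⟩).subset ?_
  rintro p ⟨hpS, t, rfl⟩
  cases t with
  | nil => simp
  | cons y t =>
    have hpre : l ++ [y] <+: l ++ y :: t := ⟨t, by simp⟩
    exact Or.inr (Set.mem_biUnion ⟨_, hpS, hpre⟩ ⟨hpS, hpre⟩)

theorem mem_truncTree_iff [Preorder X] {step : X → X → Prop} {x₀ : X} {p : List X} :
    p ∈ TruncTree step x₀ ↔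
      p.head? = some x₀ ∧ p.IsChain step ∧ p.dropLast.Pairwise fun a b => ¬ a ≤ b := by
  simp only [TruncTree, Set.mem_ofPred_eq, List.pairwise_iff_getElem, List.length_dropLast,
    List.getElem_dropLast, List.getElem?_eq_some_iff]
  refine and_congr_right fun _ => and_congr_right fun _ => ⟨?_, ?_⟩
  · exact fun h i j hi hj hij => h i j hij (by omega) _ _ ⟨_, rfl⟩ ⟨_, rfl⟩
  · rintro h i j hij hj a b ⟨_, rfl⟩ ⟨_, rfl⟩
    exact h i j (by omega) (by omega) hij

theorem truncTree_finite [Preorder X] (hwqo : WellQuasiOrdered (α := X) (· ≤ ·))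
    {step : X → X → Prop} (hfin : ∀ x, {y | step x y}.Finite) (x₀ : X) :
    (TruncTree step x₀).Finite := by
  refine Set.finite_of_wellFounded_snoc (fun l => ?_) (Subrelation.wf ?_ hwqo.wellFounded_snoc)
  · refine (((List.finite_toSet l).biUnion fun w _ => hfin w).insert x₀).subset ?_
    rintro y ⟨p, hp, hlp⟩
    obtain ⟨hhead, hchain, -⟩ := mem_truncTree_iff.1 hp
    rcases l.eq_nil_or_concat with rfl | ⟨l, w, rfl⟩
    · left
      simpa [List.singleton_prefix_iff_head?_eq_some.1 hlp] using hhead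
    · right
      refine Set.mem_biUnion (x := w) (by simp) (List.isChain_pair.1 ?_)
      have hwy := hchain.prefix hlp
      rw [List.concat_eq_append, List.append_assoc, List.singleton_append] at hwy
      exact hwy.right_of_append
  · rintro l' l ⟨y, rfl, p, hp, hlp⟩
    have hl : l <+: p.dropLast := by
      obtain ⟨t, rfl⟩ := hlp
      exact ⟨(y :: t).dropLast, by simp⟩
    exact ⟨y, rfl, (mem_truncTree_iff.1 hp).2.2.sublist hl.sublist⟩

def DownwardCompatible [LE X] (step : X → X → Prop) : Prop :=
  ∀ (x' x y : X) (p : List X), x' ≤ x →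
    p.head? = some x → p.IsChain step → p.getLast? = some y →
    ∃ (p' : List X) (y' : X), p'.head? = some x' ∧ p'.IsChain step ∧
      p'.getLast? = some y' ∧ y' ≤ y ∧ p'.length ≤ p.length

theorem DownwardCompatible.exists_shorter_path [LE X] {step : X → X → Prop}
    (hcompat : DownwardCompatible step) {p : List X} {x y : X} (hhead : p.head? = some x)
    (hchain : p.IsChain step) (hlast : p.getLast? = some y)
    (hbad : ¬ p.Pairwise fun a b => ¬ a ≤ b) :
    ∃ (q : List X) (y' : X), q.head? = some x ∧ q.IsChain step ∧ q.getLast? = some y' ∧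
      y' ≤ y ∧ q.length < p.length := by
  obtain ⟨l₁, a, l₂, b, l₃, rfl, hab⟩ := List.exists_eq_append_of_not_pairwise hbad
  obtain ⟨p', y', hhead', hchain', hlast', hy', hlen'⟩ :=
    hcompat a b y (b :: l₃) (not_not.1 hab) rfl hchain.right_of_append
      (by rwa [List.getLast?_append_of_ne_nil _ (List.cons_ne_nil _ _)] at hlast)
  obtain ⟨t', rfl⟩ : ∃ t', p' = a :: t' := by
    cases p' with
    | nil => simp at hhead'
    | cons c t' => exact ⟨t', by simpa using hhead'⟩
  refine ⟨l₁ ++ a :: t', y', ?_, ?_, ?_, hy', ?_⟩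
  · cases l₁ <;> simpa using hhead
  · have hpre : l₁ ++ [a] <+: l₁ ++ a :: l₂ ++ b :: l₃ := ⟨l₂ ++ b :: l₃, by simp⟩
    simpa using (hchain.prefix hpre).append_overlap (l₃ := t') hchain' (List.cons_ne_nil _ _)
  · rwa [List.getLast?_append_of_ne_nil _ (List.cons_ne_nil _ _)]
  · simp only [List.length_append, List.length_cons] at hlen' ⊢
    omega

theorem DownwardCompatible.exists_pairwise_path [LE X] {step : X → X → Prop}
    (hcompat : DownwardCompatible step) {G : Set X} (hG : IsLowerSet G) {p : List X} {x y : X}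
    (hhead : p.head? = some x) (hchain : p.IsChain step) (hlast : p.getLast? = some y)
    (hy : y ∈ G) :
    ∃ (q : List X) (y' : X), q.head? = some x ∧ q.IsChain step ∧ q.getLast? = some y' ∧
      y' ∈ G ∧ q.Pairwise fun a b => ¬ a ≤ b := by
  induction hn : p.length using Nat.strong_induction_on generalizing p y with
  | _ n ih =>
  by_cases hpw : p.Pairwise fun a b => ¬ a ≤ b
  · exact ⟨p, y, hhead, hchain, hlast, hy, hpw⟩
  · obtain ⟨q, y', hqhead, hqchain, hqlast, hy', hlen⟩ :=
      hcompat.exists_shorter_path hhead hchain hlast hpw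
    exact ih _ (hn ▸ hlen) hqhead hqchain hqlast (hG hy' hy) rfl

end

/-- For a well-quasi-order `(X, ≤)` and a finitely-branching transition
relation that is downward-compatible with non-increasing path lengths, the
truncated reachability tree from `x₀` is finite, and a downward-closed target
set `G` is reachable from `x₀` iff some node of the tree lies in `G`. -/
theorem truncTree_finite_and_reach_iff {X : Type*} [Preorder X]
    (hwqo : ∀ f : ℕ → X, ∃ i j, i < j ∧ f i ≤ f j)
    (step : X → X → Prop)
    (hfin : ∀ x : X, {y | step x y}.Finite)
    (hcompat : ∀ (x' x y : X) (p : List X), x' ≤ x →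
      p.head? = some x → p.Chain' step → p.getLast? = some y →
      ∃ (p' : List X) (y' : X), p'.head? = some x' ∧ p'.Chain' step ∧
        p'.getLast? = some y' ∧ y' ≤ y ∧ p'.length ≤ p.length)
    (x₀ : X) (G : Set X) (hG : ∀ ⦃y z : X⦄, y ∈ G → z ≤ y → z ∈ G) :
    (TruncTree step x₀).Finite ∧
      ((∃ g ∈ G, Relation.ReflTransGen step x₀ g) ↔
        ∃ p ∈ TruncTree step x₀, ∃ c ∈ p, c ∈ G) := by
  have hlower : IsLowerSet G := fun _ _ hzy hy => hG hy hzy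
  refine ⟨truncTree_finite hwqo hfin x₀, ⟨?_, ?_⟩⟩
  · rintro ⟨g, hg, hreach⟩
    obtain ⟨l, hchain, hlast⟩ := List.exists_isChain_cons_of_relationReflTransGen hreach
    obtain ⟨q, y, hqhead, hqchain, hqlast, hy, hpw⟩ :=
      DownwardCompatible.exists_pairwise_path hcompat hlower rfl hchain
        (by rw [List.getLast?_eq_some_getLast (List.cons_ne_nil _ _), hlast]) hg
    exact ⟨q, mem_truncTree_iff.2 ⟨hqhead, hqchain, hpw.sublist (List.dropLast_sublist q)⟩,
      y, List.mem_of_getLast? hqlast, hy⟩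
  · rintro ⟨p, hp, c, hcp, hc⟩
    obtain ⟨hhead, hchain, -⟩ := mem_truncTree_iff.1 hp
    exact ⟨c, hc, hchain.relationReflTransGen_of_mem hhead hcp⟩
end

section
/- Suppose every computation (finite or infinite) in a transition system from configuration c reads at most k letters from a distinguished subset D of the alphabet. Define Z₋₁ = ∅ and Z_i = pre^∀_{Σ*}(pre^∀_D(Z_{i-1}↑)), where pre^∀_D(Y) is the set of configurations all of whose one-step D-successors lie in Y, and pre^∀_{Σ*}(Y) is the set of configurations all of whose Σ*-reachable configurations lie in Y. Then c ∈ Z_k. -/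
/-- Finite labeled paths: `LPath step c ls c'` means there is a finite
computation from `c` to `c'` reading the sequence of letters `ls`. -/
inductive LPath {X L : Type*} (step : L → X → X → Prop) : X → List L → X → Prop
  | nil (c : X) : LPath step c [] c
  | cons {c c₁ c₂ : X} {l : L} {ls : List L} :
      step l c c₁ → LPath step c₁ ls c₂ → LPath step c (l :: ls) c₂

/-- Upward closure with respect to the fixed quasi-order. -/
def upcl {X : Type*} [Preorder X] (Y : Set X) : Set X := {x | ∃ y ∈ Y, y ≤ x}

/-- `pre^∀_D(Y)`: all one-step successors by a `D`-letter lie in `Y`. -/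
def preAllD {X L : Type*} (step : L → X → X → Prop) (D : L → Bool)
    (Y : Set X) : Set X :=
  {c | ∀ (l : L) (c' : X), D l = true → step l c c' → c' ∈ Y}

/-- `pre^∀_{Σ*}(Y)`: all configurations reachable by letters from `Σ`
(the non-`D` letters) lie in `Y`. -/
def preAllSigmaStar {X L : Type*} (step : L → X → X → Prop) (D : L → Bool)
    (Y : Set X) : Set X :=
  {c | ∀ c' : X,
    Relation.ReflTransGen (fun a b => ∃ l, D l = false ∧ step l a b) c c' →
      c' ∈ Y}


theorem LPath.append {X L : Type*} {step : L → X → X → Prop}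
    {c c' c'' : X} {ls ls' : List L}
    (h : LPath step c ls c') (h' : LPath step c' ls' c'') :
    LPath step c (ls ++ ls') c'' := by
  induction h with
  | nil => exact h'
  | cons s _ ih => exact LPath.cons s (ih h')

theorem reach_lpath {X L : Type*} {step : L → X → X → Prop} {D : L → Bool}
    {c c' : X}
    (h : Relation.ReflTransGen (fun a b => ∃ l, D l = false ∧ step l a b) c c') :
    ∃ ls : List L, LPath step c ls c' ∧ ls.countP D = 0 := by
  induction h with
  | refl => exact ⟨[], LPath.nil c, rfl⟩
  | tail _ st ih =>
    obtain ⟨ls, p, hc⟩ := ih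
    obtain ⟨l, hl, hs⟩ := st
    refine ⟨ls ++ [l], p.append (LPath.cons hs (LPath.nil _)), ?_⟩
    simp [List.countP_append, hc, List.countP_cons, hl]

/-- If every (finite) computation from `c` reads at most `k` letters from the
distinguished subset `D` of the alphabet, then `c ∈ Z_k`, where `Z₋₁ = ∅` and
`Z_i = pre^∀_{Σ*}(pre^∀_D(Z_{i-1}↑))`. -/
theorem mem_Z_of_bounded_delays {X L : Type*} [Preorder X]
    (step : L → X → X → Prop) (D : L → Bool)
    (Z : ℕ → Set X)
    (hZ0 : Z 0 = preAllSigmaStar step D (preAllD step D (upcl (∅ : Set X))))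
    (hZs : ∀ i, Z (i + 1) = preAllSigmaStar step D (preAllD step D (upcl (Z i))))
    (k : ℕ) (c : X)
    (hk : ∀ (ls : List L) (c' : X), LPath step c ls c' → ls.countP D ≤ k) :
    c ∈ Z k := by
  induction k generalizing c with
  | zero =>
    rw [hZ0]
    intro c' hreach l c'' hD hstep
    obtain ⟨ls, p, hc⟩ := reach_lpath hreach
    have : (ls ++ [l]).countP D ≤ 0 :=
      hk _ _ (p.append (LPath.cons hstep (LPath.nil _)))
    simp [List.countP_append, hc, List.countP_cons, hD] at this
  | succ k ih =>
    rw [hZs]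
    intro c' hreach l c'' hD hstep
    obtain ⟨ls, p, hc⟩ := reach_lpath hreach
    refine ⟨c'', ih c'' ?_, le_refl _⟩
    intro ls2 c3 p2
    have : (ls ++ l :: ls2).countP D ≤ k + 1 :=
      hk _ _ (p.append (LPath.cons hstep p2))
    simp [List.countP_append, hc, List.countP_cons, hD] at this
    omega
end

section
/- Conversely, if c ∈ Z_i↑ for some i (with Z_i defined by Z₋₁ = ∅, Z_i = pre^∀_{Σ*}(pre^∀_D(Z_{i-1}↑))), and the transition relation is downward-compatible with the quasi-order (smaller configurations simulate larger ones reaching smaller results, preserving D-labels or omitting them), then there is no computation from c reading infinitely many D-letters. -/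
/-- A good computation from `c`: an infinite run reading infinitely many
letters from `D`. -/
def GoodRun {X L : Type*} (step : L → X → X → Prop) (D : L → Bool) (c : X) :
    Prop :=
  ∃ (f : ℕ → X) (l : ℕ → L), f 0 = c ∧ (∀ n, step (l n) (f n) (f (n + 1))) ∧
    ∀ N, ∃ n, N ≤ n ∧ D (l n) = true

lemma key_step {X L : Type*} [Preorder X]
    (step : L → X → X → Prop) (D : L → Bool) (S : Set X)
    (hcompat : ∀ c' c : X, c' ≤ c → GoodRun step D c → GoodRun step D c')
    (c : X) (hc : c ∈ upcl (preAllSigmaStar step D (preAllD step D S)))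
    (hg : GoodRun step D c) : ∃ c', c' ∈ S ∧ GoodRun step D c' := by
  obtain ⟨y, hy, hyc⟩ := hc
  obtain ⟨f, l, hf0, hstep, hinf⟩ := hcompat y c hyc hg
  have hex : ∃ n, D (l n) = true := by
    obtain ⟨n, _, hn⟩ := hinf 0; exact ⟨n, hn⟩
  classical
  set k := Nat.find hex with hk
  have hDk : D (l k) = true := Nat.find_spec hex
  have hlt : ∀ j < k, D (l j) = false := by
    intro j hj
    have := Nat.find_min hex hj
    simpa using this
  -- f k is reachable from y by non-D steps
  have hreach : ∀ m ≤ k, Relation.ReflTransGen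
      (fun a b => ∃ l', D l' = false ∧ step l' a b) y (f m) := by
    intro m hm
    induction m with
    | zero => rw [hf0]
    | succ m ih =>
      exact Relation.ReflTransGen.tail (ih (Nat.le_of_succ_le hm))
        ⟨l m, hlt m (Nat.lt_of_succ_le hm), hstep m⟩
  have hfk : f k ∈ preAllD step D S := hy (f k) (hreach k le_rfl)
  have hmem : f (k + 1) ∈ S := hfk (l k) (f (k + 1)) hDk (hstep k)
  refine ⟨f (k + 1), hmem, fun n => f (k + 1 + n), fun n => l (k + 1 + n),
    rfl, fun n => hstep (k + 1 + n), ?_⟩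
  intro N
  obtain ⟨n, hn, hDn⟩ := hinf (N + (k + 1))
  refine ⟨n - (k + 1), by omega, ?_⟩
  show D (l (k + 1 + (n - (k + 1)))) = true
  have hnn : k + 1 + (n - (k + 1)) = n := by omega
  rw [hnn]; exact hDn

/-- Converse direction of the fixpoint characterization: if the quasi-order is
compatible with good computations (smaller configurations inherit good
computations from larger ones), then from any `c ∈ Z_i↑` there is no
computation reading infinitely many `D`-letters. -/
theorem no_goodRun_of_mem_Z {X L : Type*} [Preorder X]
    (step : L → X → X → Prop) (D : L → Bool)
    (Z : ℕ → Set X)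
    (hZ0 : Z 0 = preAllSigmaStar step D (preAllD step D (upcl (∅ : Set X))))
    (hZs : ∀ i, Z (i + 1) = preAllSigmaStar step D (preAllD step D (upcl (Z i))))
    (hcompat : ∀ c' c : X, c' ≤ c → GoodRun step D c → GoodRun step D c') :
    ∀ (i : ℕ) (c : X), c ∈ upcl (Z i) → ¬ GoodRun step D c := by
  intro i
  induction i with
  | zero =>
    intro c hc hg
    rw [hZ0] at hc
    obtain ⟨c', hc', _⟩ := key_step step D _ hcompat c hc hg
    obtain ⟨y, hy, _⟩ := hc'
    exact hy
  | succ i ih =>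
    intro c hc hg
    rw [hZs i] at hc
    obtain ⟨c', hc', hg'⟩ := key_step step D _ hcompat c hc hg
    exact ih c' hc' hg'
end
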